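/- arXiv:1603.06104 — 2 statements merged into one kernel-verified Lean document; each statement's English description precedes it below -/
import Mathlib

section
/- Let H be a real Hilbert space with norms and bilinear forms as follows: suppose a, c₀, d₀, d₀' are real constants with d₀ > d₀', λ₀ > 0, and u satisfies the identities ∫|∇u|² = −a∫u² + ∫ u f(u) + ∫_{∂} u g(u) together with the eigenvalue bound λ₀∫u² ≤ ∫|∇u|² − d₀∫_{∂}u² + (a−c₀)∫u². If f(u)u ≤ (c₀+δ)u² + K_δ and g(u)u ≤ (d₀'+δ)u² + K_δ pointwise, with δ < min{λ₀, d₀−d₀'}, then ∫u² + ∫_{∂}u² ≤ K_δ(|Ω| + |∂Ω|)/min{λ₀−δ, d₀−d₀'−δ} and ∫|∇u|² ≤ (c₀+d₀'+2δ)·K_δ(|Ω|+|∂Ω|)/min{λ₀−δ, d₀−d₀'−δ} + K_δ(|Ω|+|∂Ω|). -/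
open MeasureTheory

/-! Substituting the energy identity into the eigenvalue inequality and bounding the
nonlinear terms by their quadratic growth leaves
`(λ₀ - δ) ∫u² + (d₀ - d₀' - δ) ∫_∂u² ≤ K_δ (|Ω| + |∂Ω|)`, which is the first bound.
Feeding the same growth bounds back into the energy identity, and dropping `-a∫u² ≤ 0`,
gives the gradient bound. -/

theorem integral_mul_le_of_mul_le_sq_add {X : Type*} [MeasurableSpace X] {μ : Measure X}
    [IsFiniteMeasure μ] {φ : ℝ → ℝ} {v : X → ℝ} {c K : ℝ}
    (hφ : ∀ s, φ s * s ≤ c * s ^ 2 + K)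
    (hv : Integrable (fun x => v x ^ 2) μ) (hvφ : Integrable (fun x => v x * φ (v x)) μ) :
    ∫ x, v x * φ (v x) ∂μ ≤ c * ∫ x, v x ^ 2 ∂μ + K * μ.real Set.univ := by
  calc ∫ x, v x * φ (v x) ∂μ ≤ ∫ x, (c * v x ^ 2 + K) ∂μ :=
        integral_mono hvφ ((hv.const_mul c).add (integrable_const K)) fun x => by
          simpa only [mul_comm] using hφ (v x)
    _ = c * ∫ x, v x ^ 2 ∂μ + K * μ.real Set.univ := by
        rw [integral_add (hv.const_mul c) (integrable_const K), integral_const_mul,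
          integral_const, smul_eq_mul, mul_comm K]

theorem add_le_div_min_of_mul_add_mul_le {A B p q S : ℝ} (hA : 0 ≤ A) (hB : 0 ≤ B)
    (hpq : 0 < min p q) (h : p * A + q * B ≤ S) : A + B ≤ S / min p q := by
  rw [le_div_iff₀ hpq]
  nlinarith [mul_le_mul_of_nonneg_right (min_le_left p q) hA,
    mul_le_mul_of_nonneg_right (min_le_right p q) hB]

theorem stmt13_general {X Y : Type*} [MeasurableSpace X] [MeasurableSpace Y]
    (μ : Measure X) (ν : Measure Y) [IsFiniteMeasure μ] [IsFiniteMeasure ν]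
    (a c₀ d₀ d₀' lam₀ δ Kδ : ℝ)
    (ha : 0 < a) (hc₀ : 0 ≤ c₀) (hd₀' : 0 ≤ d₀')
    (hδ₀ : 0 < δ) (hδ : δ < min lam₀ (d₀ - d₀'))
    (f g : ℝ → ℝ) (u : X → ℝ) (ub : Y → ℝ) (gradsq : X → ℝ)
    (hi1 : Integrable (fun x => (u x) ^ 2) μ)
    (hi3 : Integrable (fun x => u x * f (u x)) μ)
    (hi4 : Integrable (fun y => (ub y) ^ 2) ν)
    (hi5 : Integrable (fun y => ub y * g (ub y)) ν)
    (hiden : ∫ x, gradsq x ∂μ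
      = -a * ∫ x, (u x) ^ 2 ∂μ + ∫ x, u x * f (u x) ∂μ + ∫ y, ub y * g (ub y) ∂ν)
    (heig : lam₀ * ∫ x, (u x) ^ 2 ∂μ
      ≤ ∫ x, gradsq x ∂μ - d₀ * ∫ y, (ub y) ^ 2 ∂ν + (a - c₀) * ∫ x, (u x) ^ 2 ∂μ)
    (hfb : ∀ s : ℝ, f s * s ≤ (c₀ + δ) * s ^ 2 + Kδ)
    (hgb : ∀ s : ℝ, g s * s ≤ (d₀' + δ) * s ^ 2 + Kδ) :
    (∫ x, (u x) ^ 2 ∂μ) + (∫ y, (ub y) ^ 2 ∂ν)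
        ≤ Kδ * ((μ Set.univ).toReal + (ν Set.univ).toReal)
            / min (lam₀ - δ) (d₀ - d₀' - δ) ∧
    (∫ x, gradsq x ∂μ)
        ≤ (c₀ + d₀' + 2 * δ)
            * (Kδ * ((μ Set.univ).toReal + (ν Set.univ).toReal)
                / min (lam₀ - δ) (d₀ - d₀' - δ))
          + Kδ * ((μ Set.univ).toReal + (ν Set.univ).toReal) := by
  set A := ∫ x, (u x) ^ 2 ∂μ
  set B := ∫ y, (ub y) ^ 2 ∂ν
  have hA : 0 ≤ A := integral_nonneg fun x => sq_nonneg _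
  have hB : 0 ≤ B := integral_nonneg fun y => sq_nonneg _
  have hF := integral_mul_le_of_mul_le_sq_add hfb hi1 hi3
  have hG := integral_mul_le_of_mul_le_sq_add hgb hi4 hi5
  simp only [Measure.real] at hF hG
  have hmin : 0 < min (lam₀ - δ) (d₀ - d₀' - δ) := by
    rw [lt_min_iff] at hδ ⊢
    constructor <;> linarith
  have hkey : (lam₀ - δ) * A + (d₀ - d₀' - δ) * B
      ≤ Kδ * ((μ Set.univ).toReal + (ν Set.univ).toReal) := by
    linarith
  have hsum := add_le_div_min_of_mul_add_mul_le hA hB hmin hkey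
  refine ⟨hsum, ?_⟩
  have hgrad : ∫ x, gradsq x ∂μ
      ≤ (c₀ + d₀' + 2 * δ) * (A + B) + Kδ * ((μ Set.univ).toReal + (ν Set.univ).toReal) := by
    linarith [mul_nonneg ha.le hA, mul_nonneg (add_nonneg hd₀' hδ₀.le) hA,
      mul_nonneg (add_nonneg hc₀ hδ₀.le) hB]
  calc ∫ x, gradsq x ∂μ ≤ _ := hgrad
    _ ≤ _ := by gcongr

/-- abstract equilibrium a priori bound: with `∫` over `Ω` modelled by a
finite measure `μ` and `∫_∂` over `∂Ω` by a finite measure `ν`, suppose `u` satisfies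
`∫|∇u|² = −a∫u² + ∫ u f(u) + ∫_∂ u g(u)` and the eigenvalue bound
`λ₀∫u² ≤ ∫|∇u|² − d₀∫_∂u² + (a−c₀)∫u²`, with the pointwise bounds
`f(u)u ≤ (c₀+δ)u² + K_δ`, `g(u)u ≤ (d₀'+δ)u² + K_δ` and `δ < min{λ₀, d₀−d₀'}`. Then
`∫u² + ∫_∂u² ≤ K_δ(|Ω|+|∂Ω|)/min{λ₀−δ, d₀−d₀'−δ}` and
`∫|∇u|² ≤ (c₀+d₀'+2δ)·K_δ(|Ω|+|∂Ω|)/min{λ₀−δ, d₀−d₀'−δ} + K_δ(|Ω|+|∂Ω|)`. -/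
theorem stmt13 {X Y : Type*} [MeasurableSpace X] [MeasurableSpace Y]
    (μ : Measure X) (ν : Measure Y) [IsFiniteMeasure μ] [IsFiniteMeasure ν]
    (a c₀ d₀ d₀' lam₀ δ Kδ : ℝ)
    (ha : 0 < a) (hc₀ : 0 ≤ c₀) (hd₀' : 0 ≤ d₀') (hlam : 0 < lam₀)
    (hd : d₀' < d₀) (hδ₀ : 0 < δ) (hδ : δ < min lam₀ (d₀ - d₀')) (hK : 0 < Kδ)
    (f g : ℝ → ℝ) (u : X → ℝ) (ub : Y → ℝ) (gradsq : X → ℝ)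
    (hgradnn : ∀ x, 0 ≤ gradsq x)
    (hi1 : Integrable (fun x => (u x) ^ 2) μ)
    (hi2 : Integrable gradsq μ)
    (hi3 : Integrable (fun x => u x * f (u x)) μ)
    (hi4 : Integrable (fun y => (ub y) ^ 2) ν)
    (hi5 : Integrable (fun y => ub y * g (ub y)) ν)
    (hiden : ∫ x, gradsq x ∂μ
      = -a * ∫ x, (u x) ^ 2 ∂μ + ∫ x, u x * f (u x) ∂μ + ∫ y, ub y * g (ub y) ∂ν)
    (heig : lam₀ * ∫ x, (u x) ^ 2 ∂μ
      ≤ ∫ x, gradsq x ∂μ - d₀ * ∫ y, (ub y) ^ 2 ∂ν + (a - c₀) * ∫ x, (u x) ^ 2 ∂μ)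
    (hfb : ∀ s : ℝ, f s * s ≤ (c₀ + δ) * s ^ 2 + Kδ)
    (hgb : ∀ s : ℝ, g s * s ≤ (d₀' + δ) * s ^ 2 + Kδ) :
    (∫ x, (u x) ^ 2 ∂μ) + (∫ y, (ub y) ^ 2 ∂ν)
        ≤ Kδ * ((μ Set.univ).toReal + (ν Set.univ).toReal)
            / min (lam₀ - δ) (d₀ - d₀' - δ) ∧
    (∫ x, gradsq x ∂μ)
        ≤ (c₀ + d₀' + 2 * δ)
            * (Kδ * ((μ Set.univ).toReal + (ν Set.univ).toReal)
                / min (lam₀ - δ) (d₀ - d₀' - δ))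
          + Kδ * ((μ Set.univ).toReal + (ν Set.univ).toReal) :=
  stmt13_general μ ν a c₀ d₀ d₀' lam₀ δ Kδ ha hc₀ hd₀' hδ₀ hδ f g u ub gradsq hi1 hi3 hi4 hi5 hiden
    heig hfb hgb
end

section
/- Suppose f and g are continuous with limsup_{|u|→∞} f(u)/u ≤ c₀ and limsup_{|u|→∞} g(u)/u ≤ d₀', and suppose d₀ > d₀'' > d₀' are chosen with (d₀/d₀'' − 1)(a − c₀)/2 + λ₀/2 > 0 where λ₀ > 0 is the first eigenvalue of −Δ + (a − c₀) with Robin boundary condition ∂u/∂N = d₀u. Then there exist constants μ > 0 and C ≥ 0 such that the functional W(v) = (1/2)∫|∇v|² + (a/2)∫v² − ∫F(v) − ∫_{∂}G(γv) satisfies W(v) ≥ μ‖v‖²_{H¹(Ω)} − C for all v ∈ H¹(Ω); in particular W is bounded below and coercive: W(v) → ∞ as ‖v‖_{H¹} → ∞. -/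
/-!
Put `t = d₀''/d₀ ∈ (0, 1)`. Once `δ ≤ d₀'' - d₀'`, the boundary term of `W` is at most
`(d₀''/2) ∫_∂(γv)²`, and the Robin eigenvalue inequality bounds this by
`(t/2)(∫|∇v|² + (a - c₀ - λ₀)∫v²)`. What is left is
`W(v) ≥ ((1 - t)/2) ∫|∇v|² + (α - δ/2) ∫v² - C` with
`α = t((1/t - 1)(a - c₀)/2 + λ₀/2) > 0`, so any `δ ≤ α` gives coercivity with
`μ = min ((1 - t)/2) (α/2)`.
-/

lemma le_div_mul_of_robin_ineq {d₀ d₀'' lam₀ b e₁ e₂ e₃ : ℝ} (hd₀ : 0 < d₀) (hd₀'' : 0 ≤ d₀'')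
    (heig : lam₀ * e₂ ≤ e₁ - d₀ * e₃ + b * e₂) :
    d₀'' * e₃ ≤ d₀'' / d₀ * (e₁ + (b - lam₀) * e₂) := by
  have h : d₀ * e₃ ≤ e₁ + (b - lam₀) * e₂ := by linarith
  calc d₀'' * e₃ = d₀'' / d₀ * (d₀ * e₃) := by field_simp
    _ ≤ d₀'' / d₀ * (e₁ + (b - lam₀) * e₂) := by gcongr

lemma lyapunov_lower_bound {a c₀ d₀ d₀'' lam₀ δ k k' e₁ e₂ e₃ fi gi : ℝ}
    (hd₀ : 0 < d₀) (hd₀'' : 0 < d₀'')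
    (heig : lam₀ * e₂ ≤ e₁ - d₀ * e₃ + (a - c₀) * e₂)
    (hfi : fi ≤ (c₀ + δ) / 2 * e₂ + k) (hgi : gi ≤ d₀'' / 2 * e₃ + k') :
    (1 - d₀'' / d₀) / 2 * e₁
        + (d₀'' / d₀ * ((d₀ / d₀'' - 1) * (a - c₀) / 2 + lam₀ / 2) - δ / 2) * e₂ - (k + k')
      ≤ 1 / 2 * e₁ + a / 2 * e₂ - fi - gi := by
  have hbdry := le_div_mul_of_robin_ineq hd₀ hd₀''.le heig
  have hcoef : d₀'' / d₀ * ((d₀ / d₀'' - 1) * (a - c₀) / 2 + lam₀ / 2)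
      = (1 - d₀'' / d₀) * (a - c₀) / 2 + d₀'' / d₀ * lam₀ / 2 := by
    field_simp
  rw [hcoef]
  linarith

lemma exists_le_of_coercive_bound {V : Type*} {N W : V → ℝ} {μ C : ℝ} (hμ : 0 ≤ μ)
    (hN : ∀ v, 0 ≤ N v) (h : ∀ v, μ * N v - C ≤ W v) : ∃ m, ∀ v, m ≤ W v :=
  ⟨-C, fun v => by linarith [h v, mul_nonneg hμ (hN v)]⟩

lemma exists_forall_le_of_coercive_bound {V : Type*} {N W : V → ℝ} {μ C : ℝ} (hμ : 0 < μ)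
    (h : ∀ v, μ * N v - C ≤ W v) (R : ℝ) : ∃ ρ, ∀ v, ρ ≤ N v → R ≤ W v := by
  refine ⟨(R + C) / μ, fun v hv => ?_⟩
  have : R + C ≤ μ * N v := by rwa [div_le_iff₀' hμ] at hv
  linarith [h v]

theorem stmt18_general {V : Type*}
    (a c₀ d₀ d₀' d₀'' lam₀ : ℝ)
    (E₁ E₂ E₃ FI GI : V → ℝ)
    (hE₁ : ∀ v, 0 ≤ E₁ v) (hE₂ : ∀ v, 0 ≤ E₂ v) (hE₃ : ∀ v, 0 ≤ E₃ v)
    (heig : ∀ v, lam₀ * E₂ v ≤ E₁ v - d₀ * E₃ v + (a - c₀) * E₂ v)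
    (hd1 : d₀' < d₀'') (hd2 : d₀'' < d₀) (hd3 : 0 < d₀'')
    (hcond : 0 < (d₀ / d₀'' - 1) * (a - c₀) / 2 + lam₀ / 2)
    (hFb : ∀ δ : ℝ, 0 < δ → ∃ k₀ : ℝ, 0 ≤ k₀ ∧
      ∀ v, FI v ≤ ((c₀ + δ) / 2) * E₂ v + k₀)
    (hGb : ∀ δ : ℝ, 0 < δ → ∃ k₀' : ℝ, 0 ≤ k₀' ∧
      ∀ v, GI v ≤ ((d₀' + δ) / 2) * E₃ v + k₀') :
    (∃ μ : ℝ, 0 < μ ∧ ∃ C : ℝ, 0 ≤ C ∧ ∀ v,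
        μ * (E₁ v + E₂ v) - C ≤ (1/2) * E₁ v + (a/2) * E₂ v - FI v - GI v) ∧
    (∃ m : ℝ, ∀ v, m ≤ (1/2) * E₁ v + (a/2) * E₂ v - FI v - GI v) ∧
    (∀ R : ℝ, ∃ ρ : ℝ, ∀ v, ρ ≤ E₁ v + E₂ v →
        R ≤ (1/2) * E₁ v + (a/2) * E₂ v - FI v - GI v) := by
  have hd₀ : 0 < d₀ := hd3.trans hd2
  set α := d₀'' / d₀ * ((d₀ / d₀'' - 1) * (a - c₀) / 2 + lam₀ / 2)
  set β := (1 - d₀'' / d₀) / 2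
  set δ := min α (d₀'' - d₀')
  have hα : 0 < α := mul_pos (div_pos hd3 hd₀) hcond
  have hβ : 0 < β := by have := (div_lt_one hd₀).2 hd2; unfold β; linarith
  have hδ : 0 < δ := lt_min hα (sub_pos.2 hd1)
  obtain ⟨k₀, hk₀, hF⟩ := hFb δ hδ
  obtain ⟨k₀', hk₀', hG⟩ := hGb δ hδ
  have hG'' : ∀ v, GI v ≤ d₀'' / 2 * E₃ v + k₀' := fun v => by
    have : (d₀' + δ) / 2 ≤ d₀'' / 2 := by linarith [min_le_right α (d₀'' - d₀')]
    linarith [hG v, mul_le_mul_of_nonneg_right this (hE₃ v)]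
  have key : ∀ v, min β (α / 2) * (E₁ v + E₂ v) - (k₀ + k₀')
      ≤ (1/2) * E₁ v + (a/2) * E₂ v - FI v - GI v := fun v => by
    have hαδ : α / 2 ≤ α - δ / 2 := by linarith [min_le_left α (d₀'' - d₀')]
    calc min β (α / 2) * (E₁ v + E₂ v) - (k₀ + k₀')
        ≤ β * E₁ v + (α - δ / 2) * E₂ v - (k₀ + k₀') := by
          rw [mul_add]
          gcongr ?_ * _ + ?_ * _ - _
          exacts [hE₁ v, min_le_left _ _, hE₂ v, (min_le_right _ _).trans hαδ]
      _ ≤ _ := lyapunov_lower_bound hd₀ hd3 (heig v) (hF v) (hG'' v)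
  have hμ : 0 < min β (α / 2) := lt_min hβ (half_pos hα)
  exact ⟨⟨_, hμ, _, add_nonneg hk₀ hk₀', key⟩,
    exists_le_of_coercive_bound hμ.le (fun v => add_nonneg (hE₁ v) (hE₂ v)) key,
    exists_forall_le_of_coercive_bound hμ key⟩

/-- coercivity of the Lyapunov functional, abstract form: for
`v ∈ H¹(Ω)` write `E₁ v = ∫|∇v|²`, `E₂ v = ∫v²`, `E₃ v = ∫_∂(γv)²`, `FI v = ∫F(v)`,
`GI v = ∫_∂G(γv)`, so `‖v‖²_{H¹} = E₁ v + E₂ v` and the Lyapunov functional is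
`W(v) = (1/2)E₁ v + (a/2)E₂ v − FI v − GI v`. Assume the eigenvalue inequality
`λ₀ E₂ ≤ E₁ − d₀ E₃ + (a−c₀) E₂` with `λ₀ > 0`, constants `d₀ > d₀'' > d₀'`, `d₀'' > 0`,
`(d₀/d₀'' − 1)(a−c₀)/2 + λ₀/2 > 0`, and the primitive bounds
`FI v ≤ ((c₀+δ)/2)E₂ v + k₀`, `GI v ≤ ((d₀'+δ)/2)E₃ v + k₀'` (for every `δ > 0`, with
suitable `k₀, k₀' ≥ 0`). Then there exist `μ > 0` and `C ≥ 0` with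
`W(v) ≥ μ‖v‖²_{H¹} − C` for all `v`; in particular `W` is bounded below and coercive. -/
theorem stmt18 {V : Type*}
    (a c₀ d₀ d₀' d₀'' lam₀ : ℝ)
    (E₁ E₂ E₃ FI GI : V → ℝ)
    (hE₁ : ∀ v, 0 ≤ E₁ v) (hE₂ : ∀ v, 0 ≤ E₂ v) (hE₃ : ∀ v, 0 ≤ E₃ v)
    (hlam : 0 < lam₀)
    (heig : ∀ v, lam₀ * E₂ v ≤ E₁ v - d₀ * E₃ v + (a - c₀) * E₂ v)
    (hd1 : d₀' < d₀'') (hd2 : d₀'' < d₀) (hd3 : 0 < d₀'')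
    (hcond : 0 < (d₀ / d₀'' - 1) * (a - c₀) / 2 + lam₀ / 2)
    (hFb : ∀ δ : ℝ, 0 < δ → ∃ k₀ : ℝ, 0 ≤ k₀ ∧
      ∀ v, FI v ≤ ((c₀ + δ) / 2) * E₂ v + k₀)
    (hGb : ∀ δ : ℝ, 0 < δ → ∃ k₀' : ℝ, 0 ≤ k₀' ∧
      ∀ v, GI v ≤ ((d₀' + δ) / 2) * E₃ v + k₀') :
    (∃ μ : ℝ, 0 < μ ∧ ∃ C : ℝ, 0 ≤ C ∧ ∀ v,
        μ * (E₁ v + E₂ v) - C ≤ (1/2) * E₁ v + (a/2) * E₂ v - FI v - GI v) ∧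
    (∃ m : ℝ, ∀ v, m ≤ (1/2) * E₁ v + (a/2) * E₂ v - FI v - GI v) ∧
    (∀ R : ℝ, ∃ ρ : ℝ, ∀ v, ρ ≤ E₁ v + E₂ v →
        R ≤ (1/2) * E₁ v + (a/2) * E₂ v - FI v - GI v) :=
  stmt18_general a c₀ d₀ d₀' d₀'' lam₀ E₁ E₂ E₃ FI GI hE₁ hE₂ hE₃ heig hd1 hd2 hd3 hcond hFb hGb
end
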